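/- The adjoint of the SGWT satisfies a reconstruction identity: if W : ℝ^N → ℝ^{(J+1)N} is the analysis operator Wf = (h(L)f, g(t_1 L)f, …, g(t_J L)f), then Wᵀ W = G(L) where G(λ) = h(λ)² + Σ_τ g(t_τ λ)²; hence if G(λ_l) > 0 for all eigenvalues λ_l of L, then f = G(L)^{-1} Wᵀ (Wf), giving exact reconstruction. -/

import Mathlib

/-! With `U = of chi` (rows the eigenvectors), `specApply lam chi φ` is the matrix `Uᵀ D_φ U`,
where `D_φ = diagonal (φ ∘ lam)`. Orthonormality of the rows says `U Uᵀ = 1`, hence also `Uᵀ U = 1`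
for a square matrix; so `φ ↦ φ(L)` is multiplicative and `1(L) = 1`, and the reconstruction identity
is the pointwise identity `h² + ∑ g(t_τ ·)² = G` on the spectrum, divided by `G > 0`. -/

open Matrix

/-- Functional calculus applied to a signal, given the spectral data. -/
def specApply {N : ℕ} (lam : Fin N → ℝ) (chi : Fin N → Fin N → ℝ)
    (φ : ℝ → ℝ) (f : Fin N → ℝ) : Fin N → ℝ :=
  fun n => ∑ l, φ (lam l) * (chi l ⬝ᵥ f) * chi l n

section SpectralCalculus

variable {N : ℕ} (lam : Fin N → ℝ) (chi : Fin N → Fin N → ℝ)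

theorem specApply_eq_mulVec (φ : ℝ → ℝ) (f : Fin N → ℝ) :
    specApply lam chi φ f = ((of chi)ᵀ * diagonal (φ ∘ lam) * of chi) *ᵥ f := by
  rw [← mulVec_mulVec, ← mulVec_mulVec]
  funext n
  simp only [specApply, mulVec, dotProduct, transpose_apply, of_apply, diagonal_apply,
    Function.comp_apply, ite_mul, zero_mul, Finset.sum_ite_eq, Finset.mem_univ, if_true]
  exact Finset.sum_congr rfl fun l _ => by ring

theorem specApply_add_fun (φ ψ : ℝ → ℝ) (f : Fin N → ℝ) :
    specApply lam chi (fun x => φ x + ψ x) f = specApply lam chi φ f + specApply lam chi ψ f := by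
  funext n
  simp only [specApply, Pi.add_apply, add_mul, Finset.sum_add_distrib]

theorem specApply_sum_fun {ι : Type*} (s : Finset ι) (φ : ι → ℝ → ℝ) (f : Fin N → ℝ) :
    specApply lam chi (fun x => ∑ i ∈ s, φ i x) f = ∑ i ∈ s, specApply lam chi (φ i) f := by
  funext n
  simp only [specApply, Finset.sum_apply, Finset.sum_mul]
  exact Finset.sum_comm

theorem specApply_congr {φ ψ : ℝ → ℝ} (hφψ : ∀ l, φ (lam l) = ψ (lam l)) (f : Fin N → ℝ) :
    specApply lam chi φ f = specApply lam chi ψ f := by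
  funext n
  simp only [specApply, hφψ]

variable {chi}

theorem of_mul_transpose_eq_one (horth : ∀ i j, chi i ⬝ᵥ chi j = if i = j then (1 : ℝ) else 0) :
    of chi * (of chi)ᵀ = 1 := by
  ext i j
  simpa [mul_apply, dotProduct, one_apply] using horth i j

theorem specApply_specApply
    (horth : ∀ i j, chi i ⬝ᵥ chi j = if i = j then (1 : ℝ) else 0) (φ ψ : ℝ → ℝ) (f : Fin N → ℝ) :
    specApply lam chi φ (specApply lam chi ψ f) = specApply lam chi (fun x => φ x * ψ x) f := by
  have hU := of_mul_transpose_eq_one horth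
  simp only [specApply_eq_mulVec, mulVec_mulVec]
  congr 1
  calc (of chi)ᵀ * diagonal (φ ∘ lam) * of chi * ((of chi)ᵀ * diagonal (ψ ∘ lam) * of chi)
      = (of chi)ᵀ * diagonal (φ ∘ lam) * (of chi * (of chi)ᵀ) * diagonal (ψ ∘ lam) * of chi := by
        simp only [Matrix.mul_assoc]
    _ = (of chi)ᵀ * diagonal ((fun x => φ x * ψ x) ∘ lam) * of chi := by
        rw [hU, Matrix.mul_one, Matrix.mul_assoc (of chi)ᵀ, diagonal_mul_diagonal]
        rfl

theorem specApply_one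
    (horth : ∀ i j, chi i ⬝ᵥ chi j = if i = j then (1 : ℝ) else 0) (f : Fin N → ℝ) :
    specApply lam chi (fun _ => 1) f = f := by
  have hU : (of chi)ᵀ * of chi = 1 := mul_eq_one_comm.mp (of_mul_transpose_eq_one horth)
  rw [specApply_eq_mulVec, show diagonal ((fun _ => (1 : ℝ)) ∘ lam) = 1 from diagonal_one,
    Matrix.mul_one, hU, one_mulVec]

end SpectralCalculus

theorem sgwt_adjoint_reconstruction_general {N J : ℕ}
    (lam : Fin N → ℝ) (chi : Fin N → Fin N → ℝ)
    (horth : ∀ i j, chi i ⬝ᵥ chi j = if i = j then (1 : ℝ) else 0)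
    (h g : ℝ → ℝ) (t : Fin J → ℝ)
    (G : ℝ → ℝ)
    (hG : G = fun x => h x ^ 2 + ∑ τ, g (t τ * x) ^ 2) :
    (∀ f : Fin N → ℝ,
      (specApply lam chi h (specApply lam chi h f) +
          ∑ τ, specApply lam chi (fun x => g (t τ * x))
            (specApply lam chi (fun x => g (t τ * x)) f)) =
        specApply lam chi G f) ∧
    ((∀ l, 0 < G (lam l)) → ∀ f : Fin N → ℝ,
      f = specApply lam chi (fun x => (G x)⁻¹)
        (specApply lam chi h (specApply lam chi h f) +
          ∑ τ, specApply lam chi (fun x => g (t τ * x))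
            (specApply lam chi (fun x => g (t τ * x)) f))) := by
  have frame : ∀ f : Fin N → ℝ,
      (specApply lam chi h (specApply lam chi h f) +
          ∑ τ, specApply lam chi (fun x => g (t τ * x))
            (specApply lam chi (fun x => g (t τ * x)) f)) =
        specApply lam chi G f := fun f => by
    simp only [specApply_specApply lam horth, hG, sq, specApply_add_fun,
      specApply_sum_fun]
  refine ⟨frame, fun hGpos f => ?_⟩
  rw [frame, specApply_specApply lam horth,
    specApply_congr lam chi (ψ := fun _ => 1) fun l => inv_mul_cancel₀ (hGpos l).ne',
    specApply_one lam horth]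

theorem sgwt_adjoint_reconstruction {N J : ℕ}
    (lam : Fin N → ℝ) (chi : Fin N → Fin N → ℝ)
    (horth : ∀ i j, chi i ⬝ᵥ chi j = if i = j then (1 : ℝ) else 0)
    (hpsd : ∀ l, 0 ≤ lam l)
    (h g : ℝ → ℝ) (t : Fin J → ℝ)
    (G : ℝ → ℝ)
    (hG : G = fun x => h x ^ 2 + ∑ τ, g (t τ * x) ^ 2) :
    (∀ f : Fin N → ℝ,
      (specApply lam chi h (specApply lam chi h f) +
          ∑ τ, specApply lam chi (fun x => g (t τ * x))
            (specApply lam chi (fun x => g (t τ * x)) f)) =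
        specApply lam chi G f) ∧
    ((∀ l, 0 < G (lam l)) → ∀ f : Fin N → ℝ,
      f = specApply lam chi (fun x => (G x)⁻¹)
        (specApply lam chi h (specApply lam chi h f) +
          ∑ τ, specApply lam chi (fun x => g (t τ * x))
            (specApply lam chi (fun x => g (t τ * x)) f))) :=
  sgwt_adjoint_reconstruction_general lam chi horth h g t G hG
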